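/- The Jacobian of the D2Q7 equilibrium map is a projection matrix: for all real g, all e > 0, all h ∈ ℝ and u = (u₁,u₂) ∈ ℝ², the 7×7 real matrix M with entries M_{0j} = 1 − 2gh/e² + 2(ξ_j·u)/e² − |u|²/e² for j = 0,…,6, and M_{ij} = gh/(3e²) + (ξ_i·ξ_j)/(3e²) + 4(ξ_i·ξ_j)(ξ_i·u)/(3e⁴) − 2(ξ_i·u)²/(3e⁴) − (ξ_j·u)/e² + |u|²/(2e²) for i = 1,…,6 and j = 0,…,6, satisfies M² = M. -/
import Mathlib


/-- Dot product on `ℝ × ℝ`. -/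
def pdot (a b : ℝ × ℝ) : ℝ := a.1 * b.1 + a.2 * b.2

/-- The D2Q7 lattice velocities with lattice speed `e`. -/
noncomputable def xi7 (e : ℝ) : Fin 7 → ℝ × ℝ :=
  ![(0, 0), (e, 0), (e / 2, e * Real.sqrt 3 / 2), (-e / 2, e * Real.sqrt 3 / 2),
    (-e, 0), (-e / 2, -(e * Real.sqrt 3 / 2)), (e / 2, -(e * Real.sqrt 3 / 2))]

/-- The Jacobian `∂f_i^eq/∂f_j` of the D2Q7 equilibrium map. -/
noncomputable def M7 (g e h : ℝ) (u : ℝ × ℝ) : Matrix (Fin 7) (Fin 7) ℝ :=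
  Matrix.of fun i j =>
    if i = 0 then
      1 - 2 * g * h / e ^ 2 + 2 * pdot (xi7 e j) u / e ^ 2 - pdot u u / e ^ 2
    else
      g * h / (3 * e ^ 2) + pdot (xi7 e i) (xi7 e j) / (3 * e ^ 2)
        + 4 * pdot (xi7 e i) (xi7 e j) * pdot (xi7 e i) u / (3 * e ^ 4)
        - 2 * pdot (xi7 e i) u ^ 2 / (3 * e ^ 4)
        - pdot (xi7 e j) u / e ^ 2 + pdot u u / (2 * e ^ 2)

section Aux

private lemma xi7_fst_scale (e : ℝ) : ∀ k : Fin 7, (xi7 e k).1 = e * (xi7 1 k).1 := by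
  have a0 : xi7 e 0 = (0, 0) := rfl
  have a1 : xi7 e 1 = (e, 0) := rfl
  have a2 : xi7 e 2 = (e / 2, e * Real.sqrt 3 / 2) := rfl
  have a3 : xi7 e 3 = (-e / 2, e * Real.sqrt 3 / 2) := rfl
  have a4 : xi7 e 4 = (-e, 0) := rfl
  have a5 : xi7 e 5 = (-e / 2, -(e * Real.sqrt 3 / 2)) := rfl
  have a6 : xi7 e 6 = (e / 2, -(e * Real.sqrt 3 / 2)) := rfl
  have b0 : xi7 1 0 = (0, 0) := rfl
  have b1 : xi7 1 1 = (1, 0) := rfl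
  have b2 : xi7 1 2 = (1 / 2, 1 * Real.sqrt 3 / 2) := rfl
  have b3 : xi7 1 3 = (-1 / 2, 1 * Real.sqrt 3 / 2) := rfl
  have b4 : xi7 1 4 = (-1, 0) := rfl
  have b5 : xi7 1 5 = (-1 / 2, -(1 * Real.sqrt 3 / 2)) := rfl
  have b6 : xi7 1 6 = (1 / 2, -(1 * Real.sqrt 3 / 2)) := rfl
  intro k
  fin_cases k <;>
    simp only [show ((⟨0, by omega⟩ : Fin 7)) = 0 from rfl,
      show ((⟨1, by omega⟩ : Fin 7)) = 1 from rfl,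
      show ((⟨2, by omega⟩ : Fin 7)) = 2 from rfl,
      show ((⟨3, by omega⟩ : Fin 7)) = 3 from rfl,
      show ((⟨4, by omega⟩ : Fin 7)) = 4 from rfl,
      show ((⟨5, by omega⟩ : Fin 7)) = 5 from rfl,
      show ((⟨6, by omega⟩ : Fin 7)) = 6 from rfl] <;>
    simp only [a0, a1, a2, a3, a4, a5, a6, b0, b1, b2, b3, b4, b5, b6] <;>
    ring

private lemma xi7_snd_scale (e : ℝ) : ∀ k : Fin 7, (xi7 e k).2 = e * (xi7 1 k).2 := by
  have a0 : xi7 e 0 = (0, 0) := rfl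
  have a1 : xi7 e 1 = (e, 0) := rfl
  have a2 : xi7 e 2 = (e / 2, e * Real.sqrt 3 / 2) := rfl
  have a3 : xi7 e 3 = (-e / 2, e * Real.sqrt 3 / 2) := rfl
  have a4 : xi7 e 4 = (-e, 0) := rfl
  have a5 : xi7 e 5 = (-e / 2, -(e * Real.sqrt 3 / 2)) := rfl
  have a6 : xi7 e 6 = (e / 2, -(e * Real.sqrt 3 / 2)) := rfl
  have b0 : xi7 1 0 = (0, 0) := rfl
  have b1 : xi7 1 1 = (1, 0) := rfl
  have b2 : xi7 1 2 = (1 / 2, 1 * Real.sqrt 3 / 2) := rfl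
  have b3 : xi7 1 3 = (-1 / 2, 1 * Real.sqrt 3 / 2) := rfl
  have b4 : xi7 1 4 = (-1, 0) := rfl
  have b5 : xi7 1 5 = (-1 / 2, -(1 * Real.sqrt 3 / 2)) := rfl
  have b6 : xi7 1 6 = (1 / 2, -(1 * Real.sqrt 3 / 2)) := rfl
  intro k
  fin_cases k <;>
    simp only [show ((⟨0, by omega⟩ : Fin 7)) = 0 from rfl,
      show ((⟨1, by omega⟩ : Fin 7)) = 1 from rfl,
      show ((⟨2, by omega⟩ : Fin 7)) = 2 from rfl,
      show ((⟨3, by omega⟩ : Fin 7)) = 3 from rfl,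
      show ((⟨4, by omega⟩ : Fin 7)) = 4 from rfl,
      show ((⟨5, by omega⟩ : Fin 7)) = 5 from rfl,
      show ((⟨6, by omega⟩ : Fin 7)) = 6 from rfl] <;>
    simp only [a0, a1, a2, a3, a4, a5, a6, b0, b1, b2, b3, b4, b5, b6] <;>
    ring

/-- Scaling: the Jacobian only depends on `g*h/e²` and `u/e`. -/
private lemma M7_scale (g e h u1 u2 : ℝ) (he : e ≠ 0) :
    M7 g e h (u1, u2) = M7 (g * h / e ^ 2) 1 1 (u1 / e, u2 / e) := by
  ext i j
  simp only [M7, Matrix.of_apply, pdot, xi7_fst_scale e, xi7_snd_scale e]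
  by_cases hi : i = 0 <;> simp only [hi, if_pos, if_neg, ite_true, ite_false] <;>
    field_simp <;> ring

set_option maxHeartbeats 4000000 in
/-- The `e = 1` case, by brute force over all 49 entries. -/
private lemma M7_one_proj (p a b : ℝ) :
    M7 p 1 1 (a, b) * M7 p 1 1 (a, b) = M7 p 1 1 (a, b) := by
  have h3 : Real.sqrt 3 ^ 2 = 3 := Real.sq_sqrt (by norm_num)
  have h4 : Real.sqrt 3 ^ 4 = 9 := by rw [show (4:ℕ) = 2*2 from rfl, pow_mul, h3]; norm_num
  have h3' : Real.sqrt 3 ^ 3 = 3 * Real.sqrt 3 := by rw [pow_succ, h3]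
  have h5 : Real.sqrt 3 ^ 5 = 9 * Real.sqrt 3 := by rw [pow_succ, h4]
  have h6 : Real.sqrt 3 ^ 6 = 27 := by rw [show (6:ℕ) = 2*3 from rfl, pow_mul, h3]; norm_num
  have x0 : xi7 1 0 = (0, 0) := rfl
  have x1 : xi7 1 1 = (1, 0) := rfl
  have x2 : xi7 1 2 = (1 / 2, 1 * Real.sqrt 3 / 2) := rfl
  have x3 : xi7 1 3 = (-1 / 2, 1 * Real.sqrt 3 / 2) := rfl
  have x4 : xi7 1 4 = (-1, 0) := rfl
  have x5 : xi7 1 5 = (-1 / 2, -(1 * Real.sqrt 3 / 2)) := rfl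
  have x6 : xi7 1 6 = (1 / 2, -(1 * Real.sqrt 3 / 2)) := rfl
  have f1 : (1 : Fin 7) ≠ 0 := by decide
  have f2 : (2 : Fin 7) ≠ 0 := by decide
  have f3 : (3 : Fin 7) ≠ 0 := by decide
  have f4 : (4 : Fin 7) ≠ 0 := by decide
  have f5 : (5 : Fin 7) ≠ 0 := by decide
  have f6 : (6 : Fin 7) ≠ 0 := by decide
  ext i j
  rw [Matrix.mul_apply]
  fin_cases i <;> fin_cases j <;>
    simp only [show ((⟨0, by omega⟩ : Fin 7)) = 0 from rfl,
      show ((⟨1, by omega⟩ : Fin 7)) = 1 from rfl,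
      show ((⟨2, by omega⟩ : Fin 7)) = 2 from rfl,
      show ((⟨3, by omega⟩ : Fin 7)) = 3 from rfl,
      show ((⟨4, by omega⟩ : Fin 7)) = 4 from rfl,
      show ((⟨5, by omega⟩ : Fin 7)) = 5 from rfl,
      show ((⟨6, by omega⟩ : Fin 7)) = 6 from rfl] <;>
    simp only [Fin.sum_univ_seven, M7, Matrix.of_apply] <;>
    norm_num [pdot, x0, x1, x2, x3, x4, x5, x6, f1, f2, f3, f4, f5, f6] <;>
    ring_nf <;>
    (try simp only [h3, h3', h4, h5, h6]) <;>
    (try ring)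

end Aux

theorem d2q7_jacobian_projection (g e h : ℝ) (he : 0 < e) (u : ℝ × ℝ) :
    M7 g e h u * M7 g e h u = M7 g e h u := by
  obtain ⟨u1, u2⟩ := u
  rw [M7_scale g e h u1 u2 (ne_of_gt he)]
  exact M7_one_proj _ _ _
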